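/- Let X be a strongly QI₂-continuous T₀ space. Then a net (x_i) GSI₂-converges to x if and only if (x_i) converges to x with respect to the SI₂-topology; that is, GSI₂-convergence in X is topological. -/
import Mathlib


open Set

/-- Specialization order: `x ≤ y` iff `x ∈ cl {y}`. -/
def specLE {X : Type} [TopologicalSpace X] (x y : X) : Prop := x ∈ closure {y}

/-- Upward closure w.r.t. the specialization order. -/
def upClosure {X : Type} [TopologicalSpace X] (A : Set X) : Set X :=
  {y | ∃ a ∈ A, specLE a y}

/-- The underlying set of the Smyth power space: nonempty compact saturated subsets. -/
def SmythPS (X : Type) [TopologicalSpace X] : Type :=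
  {K : Set X // K.Nonempty ∧ IsCompact K ∧ ∀ x ∈ K, ∀ y, specLE x y → y ∈ K}

/-- `□U = {K ∈ Q(X) : K ⊆ U}`. -/
def boxU {X : Type} [TopologicalSpace X] (U : Set X) : Set (SmythPS X) :=
  {K : SmythPS X | K.1 ⊆ U}

/-- The upper Vietoris topology on the Smyth power space. -/
instance smythTop (X : Type) [TopologicalSpace X] : TopologicalSpace (SmythPS X) :=
  TopologicalSpace.generateFrom {S : Set (SmythPS X) | ∃ U : Set X, IsOpen U ∧ S = boxU U}

/-- The cut `A^δ = (A^↑)^↓` w.r.t. the specialization order. -/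
def cutD {X : Type} [TopologicalSpace X] (A : Set X) : Set X :=
  {x | ∀ u : X, (∀ a ∈ A, specLE a u) → specLE x u}

/-- `U` is SI₂-open. -/
def SI2Open {X : Type} [TopologicalSpace X] (U : Set X) : Prop :=
  IsOpen U ∧ ∀ F : Set X, IsIrreducible F → (cutD F ∩ U).Nonempty → (F ∩ U).Nonempty

/-- `le` makes `I` the index of a net: nonempty, reflexive, transitive, directed. -/
def IsNetOrder {I : Type} (le : I → I → Prop) : Prop :=
  Nonempty I ∧ (∀ i, le i i) ∧ (∀ i j k, le i j → le j k → le i k) ∧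
    (∀ i j, ∃ k, le i k ∧ le j k)

/-- GSI₂-convergence of the net `xi` (indexed by `(I, le)`) to `x`. -/
def GSI2Conv {X : Type} [TopologicalSpace X] {I : Type} (le : I → I → Prop)
    (xi : I → X) (x : X) : Prop :=
  ∃ 𝒢 : Set (Set X), (∀ G ∈ 𝒢, G.Finite ∧ G.Nonempty) ∧
    IsIrreducible {K : SmythPS X | ∃ G ∈ 𝒢, K.1 = upClosure G} ∧
    (∀ U : Set X, IsOpen U → (∃ G ∈ 𝒢, upClosure G ⊆ U) →
      ∃ i₀, ∀ i, le i₀ i → xi i ∈ U) ∧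
    (⋂ G ∈ 𝒢, upClosure G) ⊆ upClosure {x}

/-- `A ≪_{I₂} B`. -/
def WayBelowI2 {X : Type} [TopologicalSpace X] (A B : Set X) : Prop :=
  ∀ D : Set X, IsIrreducible D → (cutD D ∩ B).Nonempty → (A ∩ closure D).Nonempty

/-- `w(x) = {↑F : F nonempty finite, F ≪_{I₂} x}` as a subset of the Smyth power space. -/
def wPS {X : Type} [TopologicalSpace X] (x : X) : Set (SmythPS X) :=
  {K : SmythPS X | ∃ F : Set X, F.Finite ∧ F.Nonempty ∧ WayBelowI2 F {x} ∧ K.1 = upClosure F}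

/-- QI₂-continuity. -/
def QI2Continuous (X : Type) [TopologicalSpace X] : Prop :=
  ∀ x : X, IsIrreducible (wPS x) ∧ upClosure {x} = ⋂ K ∈ wPS x, (K.1 : Set X)

/-- Strong QI₂-continuity. -/
def StronglyQI2Continuous (X : Type) [TopologicalSpace X] : Prop :=
  QI2Continuous X ∧
  ∀ (F : Set X) (x : X) (U : Set X), F.Finite → F.Nonempty → WayBelowI2 F {x} →
    IsOpen U → F ⊆ U → ∃ W : Set X, SI2Open W ∧ x ∈ W ∧ W ⊆ U

section Aux

variable {X : Type} [TopologicalSpace X]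

lemma specLE_refl (x : X) : specLE x x := subset_closure rfl

lemma specLE_trans {x y z : X} (h1 : specLE x y) (h2 : specLE y z) : specLE x z :=
  closure_minimal (Set.singleton_subset_iff.2 h2) isClosed_closure h1

lemma isOpen_up {U : Set X} (hU : IsOpen U) {a b : X} (ha : a ∈ U) (hab : specLE a b) :
    b ∈ U := by
  rcases mem_closure_iff.1 hab U hU ha with ⟨c, hcU, hcb⟩
  rw [Set.mem_singleton_iff] at hcb
  rwa [hcb] at hcU

lemma mem_upClosure_self {G : Set X} {g : X} (hg : g ∈ G) : g ∈ upClosure G :=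
  ⟨g, hg, specLE_refl g⟩

lemma upClosure_up {G : Set X} {a b : X} (ha : a ∈ upClosure G) (hab : specLE a b) :
    b ∈ upClosure G := by
  obtain ⟨g, hg, hga⟩ := ha
  exact ⟨g, hg, specLE_trans hga hab⟩

lemma isCompact_upClosure {G : Set X} (hG : G.Finite) : IsCompact (upClosure G) := by
  apply isCompact_of_finite_subcover
  intro ι Uo hUo hcover
  obtain ⟨t, ht⟩ := hG.isCompact.elim_finite_subcover Uo hUo
    (fun g hg => hcover (mem_upClosure_self hg))
  refine ⟨t, fun y hy => ?_⟩
  obtain ⟨g, hg, hgy⟩ := hy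
  obtain ⟨i, hi, hgi⟩ := Set.mem_iUnion₂.1 (ht hg)
  exact Set.mem_iUnion₂.2 ⟨i, hi, isOpen_up (hUo i) hgi hgy⟩

/-- `↑G` as an element of the Smyth power space, for `G` finite nonempty. -/
noncomputable def smythK (G : Set X) (hf : G.Finite) (hne : G.Nonempty) : SmythPS X :=
  ⟨upClosure G, ⟨hne.choose, mem_upClosure_self hne.choose_spec⟩, isCompact_upClosure hf,
    fun _ ha y hay => upClosure_up ha hay⟩

lemma isOpen_boxU {O : Set X} (hO : IsOpen O) : IsOpen (boxU O) :=
  TopologicalSpace.isOpen_generateFrom_of_mem ⟨O, hO, rfl⟩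

end Aux

theorem stmt19 {X : Type} [TopologicalSpace X] [T0Space X]
    (h : StronglyQI2Continuous X) (I : Type) (le : I → I → Prop)
    (hnet : IsNetOrder le) (xi : I → X) (x : X) :
    GSI2Conv le xi x ↔
      ∀ U : Set X, SI2Open U → x ∈ U → ∃ i₀, ∀ i, le i₀ i → xi i ∈ U := by
  constructor
  · rintro ⟨𝒢, hfin, hirr, hconv, hsub⟩ U ⟨hUo, hUsi⟩ hxU
    apply hconv U hUo
    by_contra hno
    push_neg at hno
    -- `hno : ∀ G ∈ 𝒢, ¬ upClosure G ⊆ U`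
    set 𝒮 : Set (Set X) :=
      {A | IsClosed A ∧ A ⊆ Uᶜ ∧ ∀ G ∈ 𝒢, (upClosure G ∩ A).Nonempty} with h𝒮
    have hUc : Uᶜ ∈ 𝒮 := by
      refine ⟨hUo.isClosed_compl, Set.Subset.rfl, fun G hG => ?_⟩
      obtain ⟨y, hy1, hy2⟩ := Set.not_subset.1 (hno G hG)
      exact ⟨y, hy1, hy2⟩
    -- Zorn's lemma: a minimal closed set in `Uᶜ` meeting every `↑G`
    have hzorn : ∀ c ⊆ 𝒮, IsChain (· ⊆ ·) c → c.Nonempty →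
        ∃ lb ∈ 𝒮, ∀ s ∈ c, lb ⊆ s := by
      intro c hc𝒮 hchain ⟨A₀, hA₀⟩
      haveI : Nonempty c := ⟨⟨A₀, hA₀⟩⟩
      refine ⟨⋂₀ c, ⟨isClosed_sInter fun B hB => (hc𝒮 hB).1,
        (Set.sInter_subset_of_mem hA₀).trans (hc𝒮 hA₀).2.1, fun G hG => ?_⟩,
        fun s hs => Set.sInter_subset_of_mem hs⟩
      -- compactness argument
      by_contra hemp
      rw [Set.not_nonempty_iff_eq_empty] at hemp
      have hd : Directed (· ⊇ ·) (fun B : c => (B : Set X)) := by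
        intro B₁ B₂
        rcases eq_or_ne B₁ B₂ with rfl | hne
        · exact ⟨B₁, Set.Subset.rfl, Set.Subset.rfl⟩
        · rcases hchain B₁.2 B₂.2 (fun hh => hne (Subtype.ext hh)) with hle | hle
          · exact ⟨B₁, Set.Subset.rfl, hle⟩
          · exact ⟨B₂, hle, Set.Subset.rfl⟩
      obtain ⟨B, hB⟩ := (isCompact_upClosure (hfin G hG).1).elim_directed_family_closed
        (fun B : c => (B : Set X)) (fun B => (hc𝒮 B.2).1)
        (by rwa [← Set.sInter_eq_iInter]) hd
      exact ((hc𝒮 B.2).2.2 G hG).ne_empty hB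
    obtain ⟨A, -, hAS, hAmin⟩ := zorn_superset_nonempty 𝒮 hzorn Uᶜ hUc
    obtain ⟨hAcl, hAsub, hAmeet⟩ := hAS
    -- `A` is irreducible
    have hAirr : IsIrreducible A := by
      constructor
      · obtain ⟨K, G, hG, -⟩ := hirr.1
        obtain ⟨a, -, ha⟩ := hAmeet G hG
        exact ⟨a, ha⟩
      · intro V W hVo hWo ⟨v, hvA, hvV⟩ ⟨w, hwA, hwW⟩
        by_contra hemp
        rw [Set.not_nonempty_iff_eq_empty] at hemp
        have key : ∀ O : Set X, IsOpen O → (A ∩ O).Nonempty →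
            ∃ G ∈ 𝒢, upClosure G ⊆ (A ∩ Oᶜ)ᶜ := by
          intro O hOo ⟨p, hpA, hpO⟩
          have hnotS : A ∩ Oᶜ ∉ 𝒮 := by
            intro hmem
            have := hAmin hmem Set.inter_subset_left
            exact (this hpA).2 hpO
          rw [h𝒮, Set.mem_setOf_eq] at hnotS
          push_neg at hnotS
          obtain ⟨G, hG, hGe⟩ := hnotS (hAcl.inter hOo.isClosed_compl)
            (Set.inter_subset_left.trans hAsub)
          exact ⟨G, hG, fun y hy hy' => (Set.eq_empty_iff_forall_notMem.1 hGe y ⟨hy, hy'⟩)⟩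
        obtain ⟨G₁, hG₁, hG₁s⟩ := key V hVo ⟨v, hvA, hvV⟩
        obtain ⟨G₂, hG₂, hG₂s⟩ := key W hWo ⟨w, hwA, hwW⟩
        -- use irreducibility of the family in the Smyth power space
        obtain ⟨K, ⟨G₃, hG₃, hK₃⟩, hK₁, hK₂⟩ := hirr.2 (boxU (A ∩ Vᶜ)ᶜ) (boxU (A ∩ Wᶜ)ᶜ)
          (isOpen_boxU (hAcl.inter hVo.isClosed_compl).isOpen_compl)
          (isOpen_boxU (hAcl.inter hWo.isClosed_compl).isOpen_compl)
          ⟨smythK G₁ (hfin G₁ hG₁).1 (hfin G₁ hG₁).2, ⟨G₁, hG₁, rfl⟩, hG₁s⟩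
          ⟨smythK G₂ (hfin G₂ hG₂).1 (hfin G₂ hG₂).2, ⟨G₂, hG₂, rfl⟩, hG₂s⟩
        obtain ⟨a, haG, haA⟩ := hAmeet G₃ hG₃
        have haK : a ∈ K.1 := by rw [hK₃]; exact haG
        have haVW : a ∉ V ∩ W := fun hmem =>
          Set.eq_empty_iff_forall_notMem.1 hemp a ⟨haA, hmem⟩
        rcases Classical.em (a ∈ V) with haV | haV
        · rcases Classical.em (a ∈ W) with haW | haW
          · exact haVW ⟨haV, haW⟩
          · exact hK₂ haK ⟨haA, haW⟩
        · exact hK₁ haK ⟨haA, haV⟩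
    -- `x ∈ cutD A`
    have hxcut : x ∈ cutD A := by
      intro u hu
      have hu' : u ∈ ⋂ G ∈ 𝒢, upClosure G := by
        refine Set.mem_iInter₂.2 fun G hG => ?_
        obtain ⟨a, haG, haA⟩ := hAmeet G hG
        exact upClosure_up haG (hu a haA)
      obtain ⟨a, ha, hax⟩ := hsub hu'
      rw [Set.mem_singleton_iff] at ha
      rwa [ha] at hax
    obtain ⟨a, haA, haU⟩ := hUsi A hAirr ⟨x, hxcut, hxU⟩
    exact hAsub haA haU
  · intro hsi
    refine ⟨{G | G.Finite ∧ G.Nonempty ∧ WayBelowI2 G {x}},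
      fun G hG => ⟨hG.1, hG.2.1⟩, ?_, ?_, ?_⟩
    · have heq : {K : SmythPS X |
          ∃ G ∈ {G : Set X | G.Finite ∧ G.Nonempty ∧ WayBelowI2 G {x}},
            K.1 = upClosure G} = wPS x := by
        ext K
        constructor
        · rintro ⟨G, ⟨hf, hne, hwb⟩, hK⟩
          exact ⟨G, hf, hne, hwb, hK⟩
        · rintro ⟨F, hf, hne, hwb, hK⟩
          exact ⟨F, ⟨hf, hne, hwb⟩, hK⟩
      rw [heq]
      exact (h.1 x).1
    · rintro U hUo ⟨G, hG, hGU⟩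
      obtain ⟨W, hW, hxW, hWU⟩ := h.2 G x U hG.1 hG.2.1 hG.2.2 hUo
        (fun g hg => hGU (mem_upClosure_self hg))
      obtain ⟨i₀, hi⟩ := hsi W hW hxW
      exact ⟨i₀, fun i hle => hWU (hi i hle)⟩
    · intro z hz
      rw [(h.1 x).2]
      refine Set.mem_iInter₂.2 fun K hK => ?_
      obtain ⟨F, hf, hne, hwb, hKF⟩ := hK
      rw [hKF]
      exact Set.mem_iInter₂.1 hz F ⟨hf, hne, hwb⟩
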